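/- arXiv:2105.09667 — 2 statements merged into one kernel-verified Lean document; each statement's English description precedes it below -/
import Mathlib

section
/- For two robots executing a deterministic algorithm, if there exist times t₀ < t₁ with identical algorithm input sets at t₀ and t₁, and some time t ∈ [t₀,t₁] at which the two robots are at distinct positions, then the adversary scheduler can produce an execution in which the robots are at distinct positions at infinitely many times; hence Gathering (eventual permanent co-location) fails. -/
/-- for two robots running a deterministic algorithm (modelled by a
deterministic transition function `step` driven by scheduler actions), if an
execution has two times `t₀ < t₁` with identical input sets and some time in
`[t₀, t₁]` at which the robots are at distinct positions, then the adversary can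
produce an execution (from the same initial input set) in which the robots are
at distinct positions at infinitely many times; hence Gathering fails for it. -/
theorem cycle_with_nongathered_implies_gathering_fails
    {I A : Type*} (step : I → A → I)
    (pos : I → EuclideanSpace ℝ (Fin 2) × EuclideanSpace ℝ (Fin 2))
    (sched : ℕ → A) (e : ℕ → I)
    (hstep : ∀ t, e (t + 1) = step (e t) (sched t))
    (t₀ t₁ : ℕ) (hlt : t₀ < t₁) (hcycle : e t₀ = e t₁)
    (t : ℕ) (ht₀ : t₀ ≤ t) (ht₁ : t ≤ t₁)
    (hsep : (pos (e t)).1 ≠ (pos (e t)).2) :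
    ∃ (sched' : ℕ → A) (e' : ℕ → I),
      e' 0 = e 0 ∧
      (∀ s, e' (s + 1) = step (e' s) (sched' s)) ∧
      {s : ℕ | (pos (e' s)).1 ≠ (pos (e' s)).2}.Infinite ∧
      ¬ ∃ s₀ : ℕ, ∀ s ≥ s₀, (pos (e' s)).1 = (pos (e' s)).2 := by
  set d := t₁ - t₀ with hd
  have hdpos : 0 < d := Nat.sub_pos_of_lt hlt
  set f : ℕ → ℕ := fun s => if s < t₀ then s else t₀ + (s - t₀) % d with hf
  -- key fact: f maps the arithmetic progression t + k*d to a state equal to e t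
  have key : ∀ k : ℕ, e (f (t + k * d)) = e t := by
    intro k
    have hge : ¬ t + k * d < t₀ := by omega
    have h1 : f (t + k * d) = t₀ + (t + k * d - t₀) % d := if_neg hge
    have h2 : t + k * d - t₀ = t - t₀ + k * d := by omega
    rw [h2, Nat.add_mul_mod_self_right] at h1
    rcases lt_or_eq_of_le ht₁ with h | h
    · have hm : (t - t₀) % d = t - t₀ := Nat.mod_eq_of_lt (by omega)
      rw [h1, hm]
      congr 1
      omega
    · have heq : t - t₀ = d := by omega
      have hm : (t - t₀) % d = 0 := by rw [heq, Nat.mod_self]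
      rw [h1, hm, Nat.add_zero, hcycle, h]
  refine ⟨fun s => sched (f s), fun s => e (f s), ?_, ?_, ?_, ?_⟩
  · show e (f 0) = e 0
    have hf0 : f 0 = 0 := by
      rcases Nat.eq_zero_or_pos t₀ with h | h
      · show (if (0:ℕ) < t₀ then 0 else t₀ + (0 - t₀) % d) = 0
        simp [h]
      · exact if_pos h
    rw [hf0]
  · intro s
    show e (f (s + 1)) = step (e (f s)) (sched (f s))
    by_cases hs : s + 1 ≤ t₀
    · have hs' : s < t₀ := hs
      have h1 : f s = s := if_pos hs'
      rcases lt_or_eq_of_le hs with h2 | h2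
      · have h3 : f (s + 1) = s + 1 := if_pos h2
        rw [h3, h1, hstep]
      · have h3 : f (s + 1) = t₀ + (s + 1 - t₀) % d := if_neg (by omega)
        have : s + 1 - t₀ = 0 := by omega
        rw [this, Nat.zero_mod] at h3
        rw [h3, Nat.add_zero, ← h2, h1, hstep]
    · push_neg at hs
      have hs' : t₀ ≤ s := Nat.lt_succ_iff.mp hs
      have h1 : f s = t₀ + (s - t₀) % d := if_neg (not_lt.mpr hs')
      have h2 : f (s + 1) = t₀ + (s + 1 - t₀) % d := if_neg (by omega)
      have hsub : s + 1 - t₀ = (s - t₀) + 1 := by omega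
      rw [hsub] at h2
      have hrlt : (s - t₀) % d < d := Nat.mod_lt _ hdpos
      by_cases hcase : (s - t₀) % d + 1 < d
      · have hmod : (s - t₀ + 1) % d = (s - t₀) % d + 1 := by
          rw [← Nat.mod_add_mod]
          exact Nat.mod_eq_of_lt hcase
        rw [hmod] at h2
        rw [h2, h1]
        rw [← Nat.add_assoc]
        exact hstep (t₀ + (s - t₀) % d)
      · have hreq : (s - t₀) % d + 1 = d := by omega
        have hmod : (s - t₀ + 1) % d = 0 := by
          rw [← Nat.mod_add_mod, hreq, Nat.mod_self]
        rw [hmod, Nat.add_zero] at h2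
        rw [h2, h1, Nat.add_zero]
        have hstep' := hstep (t₀ + (s - t₀) % d)
        have h3 : t₀ + (s - t₀) % d + 1 = t₁ := by omega
        rw [h3] at hstep'
        rw [hcycle]
        exact hstep'
  · apply Set.infinite_of_injective_forall_mem (f := fun k : ℕ => t + k * d)
    · intro a b hab
      simp only at hab
      exact Nat.eq_of_mul_eq_mul_right hdpos (by omega)
    · intro k
      show (pos (e (f (t + k * d)))).1 ≠ (pos (e (f (t + k * d)))).2
      rw [key k]
      exact hsep
  · rintro ⟨s₀, hall⟩
    have hk : t + s₀ * d ≥ s₀ := by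
      have := Nat.le_mul_of_pos_right s₀ hdpos
      omega
    have := hall (t + s₀ * d) hk
    rw [show ((fun s => e (f s)) (t + s₀ * d)) = e t from key s₀] at this
    exact hsep this
end

section
/- For two robots executing the midpoint (center-of-gravity) algorithm with relative vision error bounded by distance error e_d ≤ 1 and zero angle error, under FSYNC the distance between the robots never increases, and if e_d < 1 the distance after each round is at most max over errors of half the sum of perceived deviations, strictly less than the current distance; hence the robots converge. -/
open Filter

/-- two robots run the midpoint algorithm under FSYNC with
relative vision error: at round `k` robot `i` perceives the other at distance
`d k * (1 + Rᵢ k)` with `|Rᵢ k| ≤ e_d` (zero angle error) and travels half that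
perceived distance toward the other, so the new distance is
`|d k - (d k * (1 + R₁ k) + d k * (1 + R₂ k)) / 2|`. If `e_d ≤ 1` the distance
never increases, and if `e_d < 1` then `d k ≤ e_d ^ k * d 0`, strictly less
than the current distance whenever it is positive; hence the robots converge. -/
theorem midpoint_relative_error_converges
    (e_d : ℝ) (he0 : 0 ≤ e_d) (he1 : e_d ≤ 1)
    (R₁ R₂ : ℕ → ℝ)
    (hR₁ : ∀ k, R₁ k ∈ Set.Icc (-e_d) e_d)
    (hR₂ : ∀ k, R₂ k ∈ Set.Icc (-e_d) e_d)
    (d : ℕ → ℝ) (hd0 : 0 ≤ d 0)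
    (hrec : ∀ k, d (k + 1) =
      |d k - (d k * (1 + R₁ k) + d k * (1 + R₂ k)) / 2|) :
    (∀ k, d (k + 1) ≤ d k) ∧
    (e_d < 1 →
      (∀ k, d k ≤ e_d ^ k * d 0) ∧
      (∀ k, 0 < d k → d (k + 1) < d k) ∧
      Tendsto d atTop (nhds 0)) := by
  have hnn : ∀ k, 0 ≤ d k := by
    intro k; cases k with
    | zero => exact hd0
    | succ n => rw [hrec n]; exact abs_nonneg _
  have key : ∀ k, d (k + 1) ≤ e_d * d k := by
    intro k
    rw [hrec k]
    have h1 := hR₁ k; have h2 := hR₂ k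
    simp only [Set.mem_Icc] at h1 h2
    have : d k - (d k * (1 + R₁ k) + d k * (1 + R₂ k)) / 2
        = -(d k * ((R₁ k + R₂ k) / 2)) := by ring
    rw [this, abs_neg, abs_mul, abs_of_nonneg (hnn k)]
    have habs : |(R₁ k + R₂ k) / 2| ≤ e_d := by
      rw [abs_div, abs_of_nonneg (by norm_num : (0:ℝ) ≤ 2)]
      rw [div_le_iff₀ (by norm_num : (0:ℝ) < 2)]
      calc |R₁ k + R₂ k| ≤ |R₁ k| + |R₂ k| := abs_add_le _ _
        _ ≤ e_d + e_d := by
            gcongr <;> rw [abs_le] <;> constructor <;> tauto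
        _ = e_d * 2 := by ring
    calc d k * |(R₁ k + R₂ k) / 2| ≤ d k * e_d := by
          exact mul_le_mul_of_nonneg_left habs (hnn k)
      _ = e_d * d k := mul_comm _ _
  refine ⟨fun k => (key k).trans (by nlinarith [hnn k]), fun hlt => ?_⟩
  have hbound : ∀ k, d k ≤ e_d ^ k * d 0 := by
    intro k; induction k with
    | zero => simp
    | succ n ih =>
      calc d (n+1) ≤ e_d * d n := key n
        _ ≤ e_d * (e_d ^ n * d 0) := mul_le_mul_of_nonneg_left ih he0
        _ = e_d ^ (n+1) * d 0 := by ring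
  refine ⟨hbound, fun k hk => (key k).trans_lt (by nlinarith), ?_⟩
  have h0 : Tendsto (fun k => e_d ^ k * d 0) atTop (nhds 0) := by
    have := (tendsto_pow_atTop_nhds_zero_of_lt_one he0 hlt).mul_const (d 0)
    simpa using this
  exact squeeze_zero hnn hbound h0
end
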